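/- Let s be a symmetric positive definite 2×2 integer matrix and t a symmetric positive definite 2×2 half-integral matrix. Then ⟨t, s⟩ = trace(ts) > 0, and for fixed j > 0 the set { v ∈ [t] : ⟨v, s⟩ = j } is finite, where [t] is the SL_2(ℤ)-orbit of t. -/

import Mathlib

open Matrix

lemma quadform_nonneg (a b c x y : ℝ) (ha : 0 < a) (hd : b^2 ≤ a*c) :
    0 ≤ a*x^2 + 2*b*(x*y) + c*y^2 := by
  nlinarith [sq_nonneg (a*x + b*y), sq_nonneg y, mul_pos ha ha]

lemma key (a b c A B C : ℝ) (ha : 0 < a) (hc : 0 < c) (hv : b^2 < a*c)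
    (hA : 0 < A) (hC : 0 < C) (hs : B^2 < A*C) :
    0 < a*A + c*C + 2*(b*B) ∧
    (a+c)*(A*C - B^2) ≤ (a*A + c*C + 2*(b*B))*(A+C) := by
  have q1 := quadform_nonneg a b c A B ha hv.le
  have q2 := quadform_nonneg c b a C B hc (by nlinarith)
  constructor
  · nlinarith [mul_pos (add_pos ha hc) (sub_pos.2 hs), add_pos hA hC]
  · nlinarith

lemma posdef_entries {v : Matrix (Fin 2) (Fin 2) ℝ} (hv : v.PosDef) :
    0 < v 0 0 ∧ 0 < v 1 1 ∧ v 1 0 = v 0 1 ∧ (v 0 1)^2 < v 0 0 * v 1 1 := by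
  have hsym : v 1 0 = v 0 1 := by
    have := congrFun (congrFun hv.1 1) 0
    simpa using this.symm
  have h00 : 0 < v 0 0 := by
    have := (Matrix.posDef_iff_dotProduct_mulVec.1 hv).2 (x := Pi.single 0 1) (by intro h; simpa using congrFun h 0)
    simpa [dotProduct, Matrix.mulVec, Fin.sum_univ_two, Pi.single_apply] using this
  have h11 : 0 < v 1 1 := by
    have := (Matrix.posDef_iff_dotProduct_mulVec.1 hv).2 (x := Pi.single 1 1) (by intro h; simpa using congrFun h 1)
    simpa [dotProduct, Matrix.mulVec, Fin.sum_univ_two, Pi.single_apply] using this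
  have hdet := hv.det_pos
  rw [Matrix.det_fin_two] at hdet
  rw [hsym] at hdet
  exact ⟨h00, h11, hsym, by nlinarith⟩

/-- The `SL₂(ℤ)`-orbit of a matrix `t` under the action `t ↦ mᵀ t m`. -/
def sl2Orbit (t : Matrix (Fin 2) (Fin 2) ℝ) : Set (Matrix (Fin 2) (Fin 2) ℝ) :=
  {v | ∃ m : Matrix.SpecialLinearGroup (Fin 2) ℤ,
    v = ((m : Matrix (Fin 2) (Fin 2) ℤ).map ((↑) : ℤ → ℝ))ᵀ * t *
      ((m : Matrix (Fin 2) (Fin 2) ℤ).map ((↑) : ℤ → ℝ))}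

lemma orbit_props (t : Matrix (Fin 2) (Fin 2) ℝ)
    (htHalf : (∃ n : ℤ, t 0 0 = (n : ℝ)) ∧ (∃ n : ℤ, t 1 1 = (n : ℝ)) ∧
      (∃ n : ℤ, 2 * t 0 1 = (n : ℝ)))
    (ht : t.PosDef) {v : Matrix (Fin 2) (Fin 2) ℝ} (hv : v ∈ sl2Orbit t) :
    (∃ n : ℤ, v 0 0 = (n : ℝ)) ∧ (∃ n : ℤ, v 1 1 = (n : ℝ)) ∧
      (∃ n : ℤ, 2 * v 0 1 = (n : ℝ)) ∧
    v 1 0 = v 0 1 ∧ 0 < v 0 0 ∧ 0 < v 1 1 ∧ (v 0 1)^2 < v 0 0 * v 1 1 := by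
  obtain ⟨m, rfl⟩ := hv
  obtain ⟨⟨n1, h1⟩, ⟨n2, h2⟩, ⟨n3, h3⟩⟩ := htHalf
  obtain ⟨-, -, tsym, -⟩ := posdef_entries ht
  set M : Matrix (Fin 2) (Fin 2) ℝ := (m : Matrix (Fin 2) (Fin 2) ℤ).map ((↑) : ℤ → ℝ) with hMdef
  have hM : ∀ i j, M i j = (((m : Matrix (Fin 2) (Fin 2) ℤ) i j : ℤ) : ℝ) := fun _ _ => rfl
  have e : ∀ i j, (Mᵀ * t * M) i j =
      M 0 i * t 0 0 * M 0 j + M 1 i * t 1 0 * M 0 j + M 0 i * t 0 1 * M 1 j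
        + M 1 i * t 1 1 * M 1 j := by
    intro i j
    simp [Matrix.mul_apply, Fin.sum_univ_two]
    ring
  have hdetm : (m : Matrix (Fin 2) (Fin 2) ℤ) 0 0 * (m : Matrix (Fin 2) (Fin 2) ℤ) 1 1
      - (m : Matrix (Fin 2) (Fin 2) ℤ) 0 1 * (m : Matrix (Fin 2) (Fin 2) ℤ) 1 0 = 1 := by
    have := m.2
    rwa [Matrix.det_fin_two] at this
  have hdetM : M.det = 1 := by
    rw [Matrix.det_fin_two]
    simp only [hM]
    exact_mod_cast hdetm
  -- positivity of diagonal entries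
  have hpos : ∀ j : Fin 2, 0 < (Mᵀ * t * M) j j := by
    intro j
    have hx : (fun k => M k j) ≠ 0 := by
      intro h
      have h0 : M 0 j = 0 := congrFun h 0
      have h1' : M 1 j = 0 := congrFun h 1
      have : M.det = 0 := by
        rw [Matrix.det_fin_two]
        fin_cases j <;> simp_all <;> ring
      rw [hdetM] at this; norm_num at this
    have := (Matrix.posDef_iff_dotProduct_mulVec.1 ht).2 (x := fun k => M k j) hx
    have hcalc : star (fun k => M k j) ⬝ᵥ t *ᵥ (fun k => M k j)
        = (Mᵀ * t * M) j j := by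
      rw [e j j]
      simp [dotProduct, Matrix.mulVec, Fin.sum_univ_two]
      ring
    rwa [hcalc] at this
  have hsym : (Mᵀ * t * M) 1 0 = (Mᵀ * t * M) 0 1 := by
    rw [e 1 0, e 0 1]
    linear_combination (M 0 0 * M 1 1 - M 0 1 * M 1 0) * tsym
  have hdetv : (0:ℝ) < (Mᵀ * t * M) 0 0 * (Mᵀ * t * M) 1 1 - ((Mᵀ * t * M) 0 1)^2 := by
    have hd : (Mᵀ * t * M).det = t.det := by
      rw [Matrix.det_mul, Matrix.det_mul, Matrix.det_transpose, hdetM]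
      ring
    have := ht.det_pos
    rw [← hd, Matrix.det_fin_two, hsym] at this
    nlinarith [this]
  refine ⟨⟨(m:Matrix (Fin 2) (Fin 2) ℤ) 0 0 ^2 * n1 + (m:Matrix (Fin 2) (Fin 2) ℤ) 0 0 * (m:Matrix (Fin 2) (Fin 2) ℤ) 1 0 * n3 + (m:Matrix (Fin 2) (Fin 2) ℤ) 1 0 ^2 * n2, ?_⟩,
    ⟨(m:Matrix (Fin 2) (Fin 2) ℤ) 0 1 ^2 * n1 + (m:Matrix (Fin 2) (Fin 2) ℤ) 0 1 * (m:Matrix (Fin 2) (Fin 2) ℤ) 1 1 * n3 + (m:Matrix (Fin 2) (Fin 2) ℤ) 1 1 ^2 * n2, ?_⟩,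
    ⟨2*(m:Matrix (Fin 2) (Fin 2) ℤ) 0 0 * (m:Matrix (Fin 2) (Fin 2) ℤ) 0 1 * n1 + ((m:Matrix (Fin 2) (Fin 2) ℤ) 0 0 * (m:Matrix (Fin 2) (Fin 2) ℤ) 1 1 + (m:Matrix (Fin 2) (Fin 2) ℤ) 1 0 * (m:Matrix (Fin 2) (Fin 2) ℤ) 0 1) * n3 + 2*(m:Matrix (Fin 2) (Fin 2) ℤ) 1 0 * (m:Matrix (Fin 2) (Fin 2) ℤ) 1 1 * n2, ?_⟩,
    hsym, hpos 0, hpos 1, by nlinarith [hdetv]⟩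
  · rw [e 0 0]; push_cast; rw [hM 0 0, hM 1 0]
    linear_combination ((((m:Matrix (Fin 2) (Fin 2) ℤ) 0 0 :ℤ):ℝ))^2 * h1 + ((((m:Matrix (Fin 2) (Fin 2) ℤ) 1 0 :ℤ):ℝ))^2 * h2 + ((((m:Matrix (Fin 2) (Fin 2) ℤ) 0 0 :ℤ):ℝ))*((((m:Matrix (Fin 2) (Fin 2) ℤ) 1 0 :ℤ):ℝ)) * h3 + ((((m:Matrix (Fin 2) (Fin 2) ℤ) 0 0 :ℤ):ℝ))*((((m:Matrix (Fin 2) (Fin 2) ℤ) 1 0 :ℤ):ℝ)) * tsym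
  · rw [e 1 1]; push_cast; rw [hM 0 1, hM 1 1]
    linear_combination ((((m:Matrix (Fin 2) (Fin 2) ℤ) 0 1 :ℤ):ℝ))^2 * h1 + ((((m:Matrix (Fin 2) (Fin 2) ℤ) 1 1 :ℤ):ℝ))^2 * h2 + ((((m:Matrix (Fin 2) (Fin 2) ℤ) 0 1 :ℤ):ℝ))*((((m:Matrix (Fin 2) (Fin 2) ℤ) 1 1 :ℤ):ℝ)) * h3 + ((((m:Matrix (Fin 2) (Fin 2) ℤ) 0 1 :ℤ):ℝ))*((((m:Matrix (Fin 2) (Fin 2) ℤ) 1 1 :ℤ):ℝ)) * tsym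
  · rw [e 0 1]; push_cast; rw [hM 0 0, hM 1 0, hM 0 1, hM 1 1]
    linear_combination (2*(((m:Matrix (Fin 2) (Fin 2) ℤ) 0 0 :ℤ):ℝ)*(((m:Matrix (Fin 2) (Fin 2) ℤ) 0 1 :ℤ):ℝ)) * h1 + (2*(((m:Matrix (Fin 2) (Fin 2) ℤ) 1 0 :ℤ):ℝ)*(((m:Matrix (Fin 2) (Fin 2) ℤ) 1 1 :ℤ):ℝ)) * h2 + ((((m:Matrix (Fin 2) (Fin 2) ℤ) 0 0 :ℤ):ℝ)*(((m:Matrix (Fin 2) (Fin 2) ℤ) 1 1 :ℤ):ℝ) + (((m:Matrix (Fin 2) (Fin 2) ℤ) 1 0 :ℤ):ℝ)*(((m:Matrix (Fin 2) (Fin 2) ℤ) 0 1 :ℤ):ℝ)) * h3 + (2*(((m:Matrix (Fin 2) (Fin 2) ℤ) 1 0 :ℤ):ℝ)*(((m:Matrix (Fin 2) (Fin 2) ℤ) 0 1 :ℤ):ℝ)) * tsym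

/-- For `s` integral symmetric positive definite and `t` half-integral
positive definite: `tr(ts) > 0` and for each `j > 0` only finitely many
members of the orbit `[t]` pair with `s` to give `j`. -/
theorem stmt_13 (s t : Matrix (Fin 2) (Fin 2) ℝ)
    (hsInt : ∀ i j, ∃ n : ℤ, s i j = (n : ℝ)) (hs : s.PosDef)
    (htHalf : (∃ n : ℤ, t 0 0 = (n : ℝ)) ∧ (∃ n : ℤ, t 1 1 = (n : ℝ)) ∧
      (∃ n : ℤ, 2 * t 0 1 = (n : ℝ)))
    (ht : t.PosDef) :
    0 < (t * s).trace ∧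
    ∀ j : ℝ, 0 < j → {v ∈ sl2Orbit t | (v * s).trace = j}.Finite := by
  obtain ⟨hA, hC, ssym, hsdet⟩ := posdef_entries hs
  have tr : ∀ v : Matrix (Fin 2) (Fin 2) ℝ, (v * s).trace
      = v 0 0 * s 0 0 + v 1 1 * s 1 1 + (v 0 1 + v 1 0) * s 0 1 := by
    intro v
    simp [Matrix.trace, Matrix.mul_apply, Fin.sum_univ_two, Matrix.diag, ssym]
    ring
  constructor
  · obtain ⟨h00, h11, tsym, htd⟩ := posdef_entries ht
    have := (key (t 0 0) (t 0 1) (t 1 1) (s 0 0) (s 0 1) (s 1 1)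
      h00 h11 htd hA hC hsdet).1
    rw [tr t, tsym]; linarith
  · intro j hj
    set A := s 0 0 with hAdef
    set B := s 0 1 with hBdef
    set C := s 1 1 with hCdef
    set K : ℝ := j * (A + C) / (A * C - B^2) with hKdef
    set N : ℤ := ⌈K⌉ with hNdef
    have hD : 0 < A * C - B^2 := by nlinarith
    have hT : 0 < A + C := by linarith
    -- per-element facts
    have main : ∀ v ∈ {v ∈ sl2Orbit t | (v * s).trace = j},
        v 1 0 = v 0 1 ∧ v 0 0 = ((⌊v 0 0⌋ : ℤ) : ℝ) ∧ v 1 1 = ((⌊v 1 1⌋ : ℤ) : ℝ) ∧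
        2 * v 0 1 = ((⌊2 * v 0 1⌋ : ℤ) : ℝ) ∧
        (-N ≤ ⌊v 0 0⌋ ∧ ⌊v 0 0⌋ ≤ N) ∧ (-N ≤ ⌊v 1 1⌋ ∧ ⌊v 1 1⌋ ≤ N) ∧
        (-N ≤ ⌊2 * v 0 1⌋ ∧ ⌊2 * v 0 1⌋ ≤ N) := by
      rintro v ⟨hvo, hvt⟩
      obtain ⟨⟨na, ea⟩, ⟨nc, ec⟩, ⟨nb, eb⟩, vsym, ha, hc, hvd⟩ := orbit_props t htHalf ht hvo
      have hkey := key (v 0 0) (v 0 1) (v 1 1) A B C ha hc hvd hA hC hsdet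
      have htr : v 0 0 * A + v 1 1 * C + 2 * (v 0 1 * B) = j := by
        rw [← hvt, tr v, vsym]; ring
      have hsum : (v 0 0 + v 1 1) ≤ K := by
        rw [hKdef, le_div_iff₀ hD]
        calc (v 0 0 + v 1 1) * (A * C - B^2)
            ≤ (v 0 0 * A + v 1 1 * C + 2 * (v 0 1 * B)) * (A + C) := hkey.2
          _ = j * (A + C) := by rw [htr]
      have hKN : K ≤ (N : ℝ) := Int.le_ceil K
      have hNnn : (0:ℝ) ≤ (N : ℝ) := le_trans (by linarith) hKN
      have habs : |2 * v 0 1| < v 0 0 + v 1 1 := by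
        have hnn : (0:ℝ) ≤ v 0 0 + v 1 1 := by linarith
        refine lt_of_pow_lt_pow_left₀ 2 hnn ?_
        rw [sq_abs]; nlinarith [hvd, sq_nonneg (v 0 0 - v 1 1)]
      have hb2 : -(v 0 0 + v 1 1) < 2 * v 0 1 ∧ 2 * v 0 1 < v 0 0 + v 1 1 := abs_lt.1 habs
      have hNint : (0:ℤ) ≤ N := by exact_mod_cast hNnn
      have fa : ⌊v 0 0⌋ = na := by rw [ea]; exact Int.floor_intCast na
      have fc : ⌊v 1 1⌋ = nc := by rw [ec]; exact Int.floor_intCast nc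
      have fb : ⌊2 * v 0 1⌋ = nb := by rw [eb]; exact Int.floor_intCast nb
      have bna : na ≤ N := by
        have : (na:ℝ) ≤ (N:ℝ) := by rw [← ea]; linarith
        exact_mod_cast this
      have bna' : (0:ℤ) ≤ na := by
        have : (0:ℝ) ≤ (na:ℝ) := by rw [← ea]; linarith
        exact_mod_cast this
      have bnc : nc ≤ N := by
        have : (nc:ℝ) ≤ (N:ℝ) := by rw [← ec]; linarith
        exact_mod_cast this
      have bnc' : (0:ℤ) ≤ nc := by
        have : (0:ℝ) ≤ (nc:ℝ) := by rw [← ec]; linarith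
        exact_mod_cast this
      have bnb : nb ≤ N := by
        have : (nb:ℝ) ≤ (N:ℝ) := by rw [← eb]; linarith
        exact_mod_cast this
      have bnb' : -N ≤ nb := by
        have : (-(N:ℝ)) ≤ (nb:ℝ) := by rw [← eb]; linarith
        exact_mod_cast this
      exact ⟨vsym, by rw [fa, ← ea], by rw [fc, ← ec], by rw [fb, ← eb],
        ⟨by rw [fa]; omega, by rw [fa]; exact bna⟩,
        ⟨by rw [fc]; omega, by rw [fc]; exact bnc⟩,
        ⟨by rw [fb]; exact bnb', by rw [fb]; exact bnb⟩⟩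
    -- finiteness via injection into a finite box in ℤ³
    apply Set.Finite.of_finite_image (f := fun v => (⌊v 0 0⌋, ⌊v 1 1⌋, ⌊2 * v 0 1⌋))
    · apply Set.Finite.subset
        (((Set.finite_Icc (-N) N).prod ((Set.finite_Icc (-N) N).prod (Set.finite_Icc (-N) N))))
      rintro p ⟨v, hv, rfl⟩
      obtain ⟨-, -, -, -, h1, h2, h3⟩ := main v hv
      exact ⟨Set.mem_Icc.2 h1, Set.mem_Icc.2 h2, Set.mem_Icc.2 h3⟩
    · intro v hv w hw heq
      obtain ⟨vs, va, vc, vb, -, -, -⟩ := main v hv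
      obtain ⟨ws, wa, wc, wb, -, -, -⟩ := main w hw
      simp only [Prod.mk.injEq] at heq
      obtain ⟨e1, e2, e3⟩ := heq
      have h00 : v 0 0 = w 0 0 := by rw [va, wa, e1]
      have h11 : v 1 1 = w 1 1 := by rw [vc, wc, e2]
      have h01 : v 0 1 = w 0 1 := by
        have : 2 * v 0 1 = 2 * w 0 1 := by rw [vb, wb, e3]
        linarith
      ext i k
      fin_cases i <;> fin_cases k
      · exact h00
      · exact h01
      · show v 1 0 = w 1 0
        rw [vs, ws]; exact h01
      · exact h11
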